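/- arXiv:1408.6424 — 9 statements merged into one kernel-verified Lean document; each statement's English description precedes it below -/
import Mathlib

section
/- If X is a uniformly convex Banach space, then for every t in (0,2] there exists δ > 0 such that for every x in the closed unit ball of X and every sequence (x_n) in the closed unit ball with inf_{n≠m} ‖x_n − x_m‖ ≥ t, there exists n with ‖x − x_n‖/2 ≤ 1 − δ. (Uniform convexity implies property (β) of Rolewicz.) -/
/-- Uniform convexity implies property (β) of Rolewicz. -/
theorem uniformConvex_implies_propertyBeta
    (X : Type*) [NormedAddCommGroup X] [NormedSpace ℝ X] [CompleteSpace X]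
    (huc : ∀ ε : ℝ, 0 < ε → ∃ δ : ℝ, 0 < δ ∧
      ∀ x y : X, ‖x‖ ≤ 1 → ‖y‖ ≤ 1 → ε ≤ ‖x - y‖ → ‖x + y‖ / 2 ≤ 1 - δ) :
    ∀ t : ℝ, 0 < t → t ≤ 2 → ∃ δ : ℝ, 0 < δ ∧
      ∀ (x : X) (xs : ℕ → X), ‖x‖ ≤ 1 → (∀ n, ‖xs n‖ ≤ 1) →
        (∀ n m, n ≠ m → t ≤ ‖xs n - xs m‖) →
        ∃ n, ‖x - xs n‖ / 2 ≤ 1 - δ := by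
  intro t ht ht2
  obtain ⟨δ, hδ, hδ'⟩ := huc (t / 2) (by linarith)
  refine ⟨δ, hδ, fun x xs hx hxs hsep => ?_⟩
  have key : ∀ n, t / 2 ≤ ‖x + xs n‖ → ‖x - xs n‖ / 2 ≤ 1 - δ := by
    intro n hn
    have := hδ' x (-xs n) hx (by simpa using hxs n) (by simpa using hn)
    simpa [sub_eq_add_neg] using this
  by_cases h0 : t / 2 ≤ ‖x + xs 0‖
  · exact ⟨0, key 0 h0⟩
  · refine ⟨1, key 1 ?_⟩
    by_contra h1
    push_neg at h0 h1
    have hsep01 := hsep 0 1 (by norm_num)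
    have : ‖xs 0 - xs 1‖ ≤ ‖x + xs 0‖ + ‖x + xs 1‖ := by
      calc ‖xs 0 - xs 1‖ = ‖-(x + xs 0) + (x + xs 1)‖ := by rw [norm_sub_rev]; congr 1; abel
        _ ≤ ‖-(x + xs 0)‖ + ‖x + xs 1‖ := norm_add_le _ _
        _ = ‖x + xs 0‖ + ‖x + xs 1‖ := by rw [norm_neg]
    linarith
end

section
/- Let f : X → Y be a surjective uniform quotient map between Banach spaces (or more generally between metrically convex metric spaces). Then f is coarse co-Lipschitz: for every δ > 0 there exists c(δ) > 0 such that for every R ≥ δ, every y, y' ∈ Y with d(y,y') ≤ c(δ)R, and every x ∈ f⁻¹(y), there exists x' ∈ f⁻¹(y') with d(x,x') ≤ R. -/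
/-!
Fix `δ > 0`. By the lower inclusion, every point of `Y` within `ω δ` of `f x` is the image of a point
within `δ` of `x`. Metric convexity cuts a segment of length at most `n * ω δ` into `n` pieces of
length at most `ω δ`, so walking along it step by step lifts any target within `n * ω δ` of `f x` to a
point within `n * δ` of `x`. With `n = ⌊R / δ⌋₊ ≥ R / (2δ)`, the constant `c = ω δ / (2δ)` works.
-/

open Metric

theorem Nat.div_two_le_floor {K : Type*} [Field K] [LinearOrder K] [IsStrictOrderedRing K]
    [FloorSemiring K] {a : K} (ha : 1 ≤ a) : a / 2 ≤ ⌊a⌋₊ := by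
  have hfloor : (1 : K) ≤ ⌊a⌋₊ := by exact_mod_cast Nat.one_le_floor_iff a |>.2 ha
  linarith [Nat.sub_one_lt_floor a]

def MetricallyConvex (Y : Type*) [PseudoMetricSpace Y] : Prop :=
  ∀ x y : Y, ∀ t : ℝ, 0 ≤ t → t ≤ 1 →
    ∃ z : Y, dist x z = t * dist x y ∧ dist z y = (1 - t) * dist x y

theorem MetricallyConvex.exists_dist_le_of_dist_le_succ_mul {Y : Type*} [PseudoMetricSpace Y]
    (hY : MetricallyConvex Y) {a b : Y} {n : ℕ} {ε : ℝ} (h : dist a b ≤ (n + 1) * ε) :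
    ∃ z, dist a z ≤ ε ∧ dist z b ≤ n * ε := by
  have hn : (0 : ℝ) < n + 1 := by positivity
  obtain ⟨z, haz, hzb⟩ := hY a b (1 / (n + 1)) (by positivity)
    (by rw [div_le_one hn]; linarith)
  refine ⟨z, ?_, ?_⟩
  · rw [haz, one_div_mul_eq_div, div_le_iff₀ hn, mul_comm]
    exact h
  · have hcoef : 1 - 1 / ((n : ℝ) + 1) = n / (n + 1) := by field_simp; ring
    rw [hzb, hcoef, div_mul_eq_mul_div, div_le_iff₀ hn, mul_right_comm, mul_assoc]
    exact mul_le_mul_of_nonneg_left h (Nat.cast_nonneg n)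

theorem MetricallyConvex.exists_preimage_dist_le_mul {X Y : Type*} [PseudoMetricSpace X]
    [MetricSpace Y] (hY : MetricallyConvex Y) {f : X → Y} {ε δ : ℝ}
    (hf : ∀ x, closedBall (f x) ε ⊆ f '' closedBall x δ) (n : ℕ) (x : X) (y : Y)
    (h : dist (f x) y ≤ n * ε) : ∃ x', f x' = y ∧ dist x x' ≤ n * δ := by
  induction n generalizing x with
  | zero =>
    rw [Nat.cast_zero, zero_mul, dist_le_zero] at h
    exact ⟨x, h, by simp⟩
  | succ n ih =>
    push_cast at h
    obtain ⟨z, hxz, hzy⟩ := hY.exists_dist_le_of_dist_le_succ_mul h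
    obtain ⟨x₁, hx₁, rfl⟩ := hf x (mem_closedBall'.2 hxz)
    obtain ⟨x', rfl, hx₁x'⟩ := ih x₁ hzy
    refine ⟨x', rfl, ?_⟩
    calc dist x x' ≤ dist x x₁ + dist x₁ x' := dist_triangle _ _ _
      _ ≤ δ + n * δ := add_le_add (mem_closedBall'.1 hx₁) hx₁x'
      _ = (n + 1 : ℕ) * δ := by push_cast; ring

theorem uniformQuotient_coarse_coLipschitz_general
    {X Y : Type*} [MetricSpace X] [MetricSpace Y]
    (hYconv : ∀ x y : Y, ∀ t : ℝ, 0 ≤ t → t ≤ 1 →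
      ∃ z : Y, dist x z = t * dist x y ∧ dist z y = (1 - t) * dist x y)
    (f : X → Y)
    (ω Ω : ℝ → ℝ)
    (hωpos : ∀ r : ℝ, 0 < r → 0 < ω r)
    (hquot : ∀ (x : X) (r : ℝ), 0 < r →
      Metric.closedBall (f x) (ω r) ⊆ f '' Metric.closedBall x r ∧
      f '' Metric.closedBall x r ⊆ Metric.closedBall (f x) (Ω r)) :
    ∀ δ : ℝ, 0 < δ → ∃ c : ℝ, 0 < c ∧
      ∀ R : ℝ, δ ≤ R → ∀ y y' : Y, dist y y' ≤ c * R →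
        ∀ x : X, f x = y → ∃ x' : X, f x' = y' ∧ dist x x' ≤ R := by
  intro δ hδ
  have hωδ := hωpos δ hδ
  refine ⟨ω δ / (2 * δ), by positivity, fun R hR y y' hyy' x hxy => ?_⟩
  have hRδ : 1 ≤ R / δ := (one_le_div hδ).2 hR
  have hdist : dist (f x) y' ≤ ⌊R / δ⌋₊ * ω δ :=
    calc dist (f x) y' ≤ ω δ / (2 * δ) * R := hxy ▸ hyy'
      _ = R / δ / 2 * ω δ := by field_simp
      _ ≤ ⌊R / δ⌋₊ * ω δ := by gcongr; exact Nat.div_two_le_floor hRδ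
  obtain ⟨x', hx', hxx'⟩ := MetricallyConvex.exists_preimage_dist_le_mul hYconv
    (fun x => (hquot x δ hδ).1) _ x y' hdist
  refine ⟨x', hx', hxx'.trans ?_⟩
  calc (⌊R / δ⌋₊ : ℝ) * δ ≤ R / δ * δ := by gcongr; exact Nat.floor_le (by positivity)
    _ = R := div_mul_cancel₀ R hδ.ne'

/-- A surjective uniform quotient map between metrically convex metric spaces
is coarse co-Lipschitz. -/
theorem uniformQuotient_coarse_coLipschitz
    {X Y : Type*} [MetricSpace X] [MetricSpace Y]
    (hXconv : ∀ x y : X, ∀ t : ℝ, 0 ≤ t → t ≤ 1 →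
      ∃ z : X, dist x z = t * dist x y ∧ dist z y = (1 - t) * dist x y)
    (hYconv : ∀ x y : Y, ∀ t : ℝ, 0 ≤ t → t ≤ 1 →
      ∃ z : Y, dist x z = t * dist x y ∧ dist z y = (1 - t) * dist x y)
    (f : X → Y) (hsurj : Function.Surjective f)
    (ω Ω : ℝ → ℝ) (hωmono : Monotone ω) (hΩmono : Monotone Ω)
    (hωpos : ∀ r : ℝ, 0 < r → 0 < ω r)
    (hΩ0 : Filter.Tendsto Ω (nhdsWithin 0 (Set.Ioi 0)) (nhds 0))
    (hquot : ∀ (x : X) (r : ℝ), 0 < r →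
      Metric.closedBall (f x) (ω r) ⊆ f '' Metric.closedBall x r ∧
      f '' Metric.closedBall x r ⊆ Metric.closedBall (f x) (Ω r)) :
    ∀ δ : ℝ, 0 < δ → ∃ c : ℝ, 0 < c ∧
      ∀ R : ℝ, δ ≤ R → ∀ y y' : Y, dist y y' ≤ c * R →
        ∀ x : X, f x = y → ∃ x' : X, f x' = y' ∧ dist x x' ≤ R :=
  uniformQuotient_coarse_coLipschitz_general hYconv f ω Ω hωpos hquot
end

section
/- Let f : M → N be a uniform quotient map between metric spaces that is both coarse Lipschitz and coarse co-Lipschitz. If N is uniformly discrete (i.e., inf{d(y,y') : y ≠ y', y,y' ∈ N} > 0), then f is a Lipschitz quotient map: there exist constants c, L > 0 such that for every x ∈ M and r > 0, B(f(x), c·r) ⊆ f(B(x,r)) ⊆ B(f(x), L·r). -/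
/-! A uniform quotient map onto a uniformly discrete space is constant on balls of some fixed
radius `r₀`, because `Ω r` falls below the separation constant for small `r`. Above the scale
`r₀` the coarse Lipschitz and co-Lipschitz bounds are already linear, and below it both
inclusions hold trivially: the upper one since `f` does not move, the lower one since a ball of
radius less than the separation constant around `f x` is `{f x}`. -/

open Metric

section UniformlyDiscreteTarget

variable {M N : Type*} [MetricSpace M] [MetricSpace N] {f : M → N} {θ : ℝ}

theorem eq_of_dist_lt_of_separated (hdisc : ∀ y y' : N, y ≠ y' → θ ≤ dist y y') {y y' : N}
    (h : dist y y' < θ) : y = y' := by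
  by_contra hne
  exact (hdisc y y' hne).not_gt h

theorem exists_pos_forall_dist_le_imp_eq (hθ : 0 < θ)
    (hdisc : ∀ y y' : N, y ≠ y' → θ ≤ dist y y') {Ω : ℝ → ℝ}
    (hΩ0 : Filter.Tendsto Ω (nhdsWithin 0 (Set.Ioi 0)) (nhds 0))
    (hΩ : ∀ (x : M) (r : ℝ), 0 < r → f '' closedBall x r ⊆ closedBall (f x) (Ω r)) :
    ∃ r₀ > 0, ∀ x x' : M, dist x x' ≤ r₀ → f x = f x' := by
  obtain ⟨r₀, hΩr₀, hr₀⟩ :=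
    ((hΩ0.eventually (gt_mem_nhds hθ)).and self_mem_nhdsWithin).exists
  refine ⟨r₀, hr₀, fun x x' hxx' => ?_⟩
  have hx' : f x' ∈ closedBall (f x) (Ω r₀) :=
    hΩ x r₀ hr₀ ⟨x', mem_closedBall.2 (by rwa [dist_comm]), rfl⟩
  exact (eq_of_dist_lt_of_separated hdisc ((mem_closedBall.1 hx').trans_lt hΩr₀)).symm

theorem lipschitzWith_of_forall_dist_le_imp_eq {r₀ : ℝ} {L : NNReal}
    (hconst : ∀ x x' : M, dist x x' ≤ r₀ → f x = f x')
    (hLip : ∀ x x' : M, r₀ ≤ dist x x' → dist (f x) (f x') ≤ L * dist x x') :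
    LipschitzWith L f := by
  refine LipschitzWith.of_dist_le_mul fun x x' => ?_
  rcases le_total r₀ (dist x x') with hfar | hnear
  · exact hLip x x' hfar
  · rw [hconst x x' hnear, dist_self]
    positivity

theorem closedBall_subset_image_closedBall_of_coarseCoLipschitz (hθ : 0 < θ)
    (hdisc : ∀ y y' : N, y ≠ y' → θ ≤ dist y y') {r₀ c : ℝ} (hr₀ : 0 < r₀)
    (hCoLip : ∀ R : ℝ, r₀ ≤ R → ∀ y y' : N, dist y y' ≤ c * R →
      ∀ x : M, f x = y → ∃ x' : M, f x' = y' ∧ dist x x' ≤ R)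
    (x : M) {r : ℝ} (hr : 0 ≤ r) :
    closedBall (f x) (min c (θ / r₀) * r) ⊆ f '' closedBall x r := by
  intro y hy
  rw [mem_closedBall, dist_comm] at hy
  rcases le_or_gt r₀ r with hfar | hnear
  · obtain ⟨x', rfl, hxx'⟩ :=
      hCoLip r hfar (f x) y (hy.trans (by gcongr; exact min_le_left _ _)) x rfl
    exact ⟨x', mem_closedBall.2 (by rwa [dist_comm]), rfl⟩
  · have hsmall : dist (f x) y < θ :=
      calc dist (f x) y ≤ min c (θ / r₀) * r := hy
        _ ≤ θ / r₀ * r := by gcongr; exact min_le_right _ _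
        _ < θ / r₀ * r₀ := by gcongr
        _ = θ := by field_simp
    exact ⟨x, mem_closedBall_self hr, eq_of_dist_lt_of_separated hdisc hsmall⟩

end UniformlyDiscreteTarget

theorem uniformQuotient_discrete_target_LipschitzQuotient_general
    {M N : Type*} [MetricSpace M] [MetricSpace N]
    (f : M → N)
    (ω Ω : ℝ → ℝ)
    (hΩ0 : Filter.Tendsto Ω (nhdsWithin 0 (Set.Ioi 0)) (nhds 0))
    (hquot : ∀ (x : M) (r : ℝ), 0 < r →
      Metric.closedBall (f x) (ω r) ⊆ f '' Metric.closedBall x r ∧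
      f '' Metric.closedBall x r ⊆ Metric.closedBall (f x) (Ω r))
    (hcoarseLip : ∀ δ : ℝ, 0 < δ → ∃ L : ℝ, 0 < L ∧
      ∀ x x' : M, δ ≤ dist x x' → dist (f x) (f x') ≤ L * dist x x')
    (hcoarseCoLip : ∀ δ : ℝ, 0 < δ → ∃ c : ℝ, 0 < c ∧
      ∀ R : ℝ, δ ≤ R → ∀ y y' : N, dist y y' ≤ c * R →
        ∀ x : M, f x = y → ∃ x' : M, f x' = y' ∧ dist x x' ≤ R)
    (hdiscrete : ∃ θ : ℝ, 0 < θ ∧ ∀ y y' : N, y ≠ y' → θ ≤ dist y y') :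
    ∃ c L : ℝ, 0 < c ∧ 0 < L ∧ ∀ (x : M) (r : ℝ), 0 < r →
      Metric.closedBall (f x) (c * r) ⊆ f '' Metric.closedBall x r ∧
      f '' Metric.closedBall x r ⊆ Metric.closedBall (f x) (L * r) := by
  obtain ⟨θ, hθ, hdisc⟩ := hdiscrete
  obtain ⟨r₀, hr₀, hconst⟩ :=
    exists_pos_forall_dist_le_imp_eq hθ hdisc hΩ0 fun x r hr => (hquot x r hr).2
  obtain ⟨L, hL, hLip⟩ := hcoarseLip r₀ hr₀
  obtain ⟨c, hc, hCoLip⟩ := hcoarseCoLip r₀ hr₀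
  have hf : LipschitzWith L.toNNReal f :=
    lipschitzWith_of_forall_dist_le_imp_eq hconst (by rwa [Real.coe_toNNReal _ hL.le])
  refine ⟨min c (θ / r₀), L, lt_min hc (by positivity), hL, fun x r hr => ⟨?_, ?_⟩⟩
  · exact closedBall_subset_image_closedBall_of_coarseCoLipschitz hθ hdisc hr₀ hCoLip x hr.le
  · simpa [Real.coe_toNNReal _ hL.le] using (hf.mapsTo_closedBall x r).image_subset

/-- A surjective uniform quotient map between metric spaces which is coarse Lipschitz and
coarse co-Lipschitz, with uniformly discrete target, is a Lipschitz quotient map. -/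
theorem uniformQuotient_discrete_target_LipschitzQuotient
    {M N : Type*} [MetricSpace M] [MetricSpace N]
    (f : M → N) (hsurj : Function.Surjective f)
    (ω Ω : ℝ → ℝ) (hωmono : Monotone ω) (hΩmono : Monotone Ω)
    (hωpos : ∀ r : ℝ, 0 < r → 0 < ω r)
    (hΩ0 : Filter.Tendsto Ω (nhdsWithin 0 (Set.Ioi 0)) (nhds 0))
    (hquot : ∀ (x : M) (r : ℝ), 0 < r →
      Metric.closedBall (f x) (ω r) ⊆ f '' Metric.closedBall x r ∧
      f '' Metric.closedBall x r ⊆ Metric.closedBall (f x) (Ω r))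
    (hcoarseLip : ∀ δ : ℝ, 0 < δ → ∃ L : ℝ, 0 < L ∧
      ∀ x x' : M, δ ≤ dist x x' → dist (f x) (f x') ≤ L * dist x x')
    (hcoarseCoLip : ∀ δ : ℝ, 0 < δ → ∃ c : ℝ, 0 < c ∧
      ∀ R : ℝ, δ ≤ R → ∀ y y' : N, dist y y' ≤ c * R →
        ∀ x : M, f x = y → ∃ x' : M, f x' = y' ∧ dist x x' ≤ R)
    (hdiscrete : ∃ θ : ℝ, 0 < θ ∧ ∀ y y' : N, y ≠ y' → θ ≤ dist y y') :
    ∃ c L : ℝ, 0 < c ∧ 0 < L ∧ ∀ (x : M) (r : ℝ), 0 < r →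
      Metric.closedBall (f x) (c * r) ⊆ f '' Metric.closedBall x r ∧
      f '' Metric.closedBall x r ⊆ Metric.closedBall (f x) (L * r) :=
  uniformQuotient_discrete_target_LipschitzQuotient_general f ω Ω hΩ0 hquot hcoarseLip hcoarseCoLip
    hdiscrete
end

section
/- For every non-reflexive Banach space X and every θ ∈ (0,1), there exist sequences (u_n) in the closed unit ball of X and (u*_n) in the closed unit ball of X* such that u*_n(u_k) = θ if n ≤ k and u*_n(u_k) = 0 if n > k. -/
/-!
Let `J : X → X**` be the canonical embedding. By Riesz's lemma for the closed proper subspace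
`J X`, there is `F ∈ X**` with `‖F‖ < 1` and `dist (F, J X) > θ`. By Helly's theorem, a finite
system `fᵢ x = cᵢ` has a solution of norm `< r` as soon as `‖∑ aᵢ cᵢ‖ ≤ M ‖∑ aᵢ fᵢ‖` for all `a`,
for some `M < r`. This lets us choose alternately
* `φ n` in the unit ball of `X*` with `F (φ n) = θ` and `φ n (u k) = 0` for `k < n`, which is
  possible because `F` is far from the span of the `J (u k)`;
* `u n` in the unit ball of `X` with `φ k (u n) = F (φ k) = θ` for `k ≤ n`, which is possible
  because `‖F‖ < 1`.
-/

theorem exists_forall_apply_eq_of_forall_sum_eq_zero {K E ι : Type*} [Field K] [AddCommGroup E]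
    [Module K E] [Fintype ι] (f : ι → Module.Dual K E) (c : ι → K)
    (h : ∀ a : ι → K, (∀ x, ∑ i, a i * f i x = 0) → ∑ i, a i * c i = 0) :
    ∃ x, ∀ i, f i x = c i := by
  classical
  suffices c ∈ LinearMap.range (LinearMap.pi f) by
    obtain ⟨x, hx⟩ := this
    exact ⟨x, fun i => congrFun hx i⟩
  rw [← Subspace.forall_mem_dualAnnihilator_apply_eq_zero_iff]
  intro φ hφ
  rw [Submodule.mem_dualAnnihilator] at hφ
  have hsum (y : ι → K) : φ y = ∑ i, φ (fun j => if i = j then 1 else 0) * y i := by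
    simp only [LinearMap.pi_apply_eq_sum_univ φ y, smul_eq_mul, mul_comm]
  rw [hsum]
  exact h _ fun x => (hsum _).symm.trans (hφ _ (LinearMap.mem_range_self _ x))

theorem norm_mul_infDist_le_norm_smul_add {𝕜 V : Type*} [NormedField 𝕜] [NormedAddCommGroup V]
    [NormedSpace 𝕜 V] (W : Submodule 𝕜 V) (v : V) (a : 𝕜) {w : V} (hw : w ∈ W) :
    ‖a‖ * Metric.infDist v W ≤ ‖a • v + w‖ := by
  rcases eq_or_ne a 0 with rfl | ha
  · simp
  calc ‖a‖ * Metric.infDist v W ≤ ‖a‖ * dist v (-a⁻¹ • w) := by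
        gcongr
        exact Metric.infDist_le_dist_of_mem (W.smul_mem _ hw)
    _ = ‖a • v + w‖ := by
        rw [dist_eq_norm, ← norm_smul, smul_sub, smul_smul, mul_neg, mul_inv_cancel₀ ha,
          neg_one_smul, sub_neg_eq_add]

theorem exists_norm_lt_one_lt_infDist {𝕜 E : Type*} [RCLike 𝕜] [NormedAddCommGroup E]
    [NormedSpace 𝕜 E] {K : Submodule 𝕜 E} (hK : IsClosed (K : Set E)) (hKE : ∃ x, x ∉ K)
    {θ : ℝ} (hθ : θ < 1) : ∃ F, ‖F‖ < 1 ∧ θ < Metric.infDist F (K : Set E) := by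
  obtain ⟨t, ht, ht1⟩ := exists_between (max_lt hθ one_pos)
  have ht0 : 0 < t := (le_max_right θ 0).trans_lt ht
  obtain ⟨s, hs, hs1⟩ := exists_between ((div_lt_one ht0).2 ((le_max_left θ 0).trans_lt ht))
  obtain ⟨x, -, hx1, hxK⟩ := riesz_lemma_of_lt_one hK hKE hs1
  refine ⟨(t : 𝕜) • x, by rwa [norm_smul, hx1, mul_one, RCLike.norm_ofReal, abs_of_pos ht0], ?_⟩
  calc θ < t * s := (div_lt_iff₀' ht0).1 hs
    _ ≤ Metric.infDist ((t : 𝕜) • x) K := (Metric.le_infDist ⟨0, K.zero_mem⟩).2 fun y hy => ?_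
  calc t * s ≤ t * ‖x - (t : 𝕜)⁻¹ • y‖ := by gcongr; exact hxK _ (K.smul_mem _ hy)
    _ = ‖(t : 𝕜) • (x - (t : 𝕜)⁻¹ • y)‖ := by rw [norm_smul, RCLike.norm_ofReal, abs_of_pos ht0]
    _ = dist ((t : 𝕜) • x) y := by
      rw [smul_sub, smul_inv_smul₀ (RCLike.ofReal_ne_zero.2 ht0.ne'), dist_eq_norm]

section Helly

variable {𝕜 E ι : Type*} [RCLike 𝕜] [NormedAddCommGroup E] [NormedSpace 𝕜 E] [Fintype ι]

theorem exists_norm_lt_forall_apply_eq (f : ι → StrongDual 𝕜 E) (c : ι → 𝕜) {M r : ℝ}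
    (hM : 0 ≤ M) (hMr : M < r)
    (h : ∀ a : ι → 𝕜, ‖∑ i, a i * c i‖ ≤ M * ‖∑ i, a i • f i‖) :
    ∃ x, ‖x‖ < r ∧ ∀ i, f i x = c i := by
  obtain ⟨x₀, hx₀⟩ := exists_forall_apply_eq_of_forall_sum_eq_zero (fun i => (f i : E →ₗ[𝕜] 𝕜)) c
    fun a ha => by
      have hzero : ∑ i, a i • f i = 0 := by ext x; simpa using ha x
      simpa [hzero] using h a
  simp only [ContinuousLinearMap.coe_coe] at hx₀
  let N : Submodule 𝕜 E := ⨅ i, LinearMap.ker (f i : E →ₗ[𝕜] 𝕜)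
  have : IsClosed (N : Set E) := by
    simpa [N, Submodule.coe_iInf] using isClosed_iInter fun i => (f i).isClosed_ker
  -- A norming functional of `x₀ mod N` factors through the `f i`, so `‖x₀ mod N‖ ≤ M`.
  obtain ⟨φ, hφ1, hφx₀⟩ := exists_dual_vector'' 𝕜 (Submodule.Quotient.mk x₀ : E ⧸ N)
  let g := φ.comp N.mkQL
  obtain ⟨a, ha⟩ := (Submodule.mem_span_range_iff_exists_fun 𝕜).1 <|
    mem_span_of_iInf_ker_le_ker (L := fun i => (f i : E →ₗ[𝕜] 𝕜)) (K := (g : E →ₗ[𝕜] 𝕜))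
      fun x hx => by simp [g, (Submodule.Quotient.mk_eq_zero N).2 hx]
  have hg : ∑ i, a i • f i = g := by ext x; simpa using LinearMap.congr_fun ha x
  have hgnorm : ‖g‖ ≤ 1 := by
    refine g.opNorm_le_bound zero_le_one fun x => ?_
    calc ‖g x‖ ≤ ‖φ‖ * ‖(Submodule.Quotient.mk x : E ⧸ N)‖ := φ.le_opNorm _
      _ ≤ 1 * ‖x‖ := by gcongr; exact Submodule.Quotient.norm_mk_le _ x
  have hdist : ‖(Submodule.Quotient.mk x₀ : E ⧸ N)‖ ≤ M := by
    calc ‖(Submodule.Quotient.mk x₀ : E ⧸ N)‖ = ‖g x₀‖ := by simp [g, hφx₀]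
      _ = ‖∑ i, a i * c i‖ := by simp [← hg, hx₀]
      _ ≤ M * ‖g‖ := hg ▸ h a
      _ ≤ M := mul_le_of_le_one_right hM hgnorm
  obtain ⟨x, hx, hxr⟩ :=
    Submodule.Quotient.norm_mk_lt (Submodule.Quotient.mk x₀ : E ⧸ N) (sub_pos.2 hMr)
  refine ⟨x, by linarith, fun i => ?_⟩
  rw [Submodule.Quotient.eq] at hx
  have := (Submodule.mem_iInf _).1 hx i
  rw [LinearMap.mem_ker, map_sub, sub_eq_zero] at this
  simpa [hx₀] using this

theorem exists_norm_lt_forall_apply_eq_doubleDual (F : StrongDual 𝕜 (StrongDual 𝕜 E))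
    (f : ι → StrongDual 𝕜 E) {r : ℝ} (hr : ‖F‖ < r) :
    ∃ x, ‖x‖ < r ∧ ∀ i, f i x = F (f i) :=
  exists_norm_lt_forall_apply_eq f (fun i => F (f i)) (norm_nonneg F) hr fun a => by
    simpa [map_sum, map_smul] using F.le_opNorm (∑ i, a i • f i)

theorem exists_norm_lt_apply_eq_forall_apply_eq_zero (W : Submodule 𝕜 (StrongDual 𝕜 E))
    (F : StrongDual 𝕜 E) (g : ι → StrongDual 𝕜 E) (hg : ∀ j, g j ∈ W) (t : 𝕜) {r : ℝ}
    (hr : ‖t‖ < r * Metric.infDist F W) :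
    ∃ x, ‖x‖ < r ∧ F x = t ∧ ∀ j, g j x = 0 := by
  have hd : 0 < Metric.infDist F W := by
    refine Metric.infDist_nonneg.lt_of_ne fun hd => (norm_nonneg t).not_gt ?_
    rwa [← hd, mul_zero] at hr
  obtain ⟨x, hx, hxF⟩ := exists_norm_lt_forall_apply_eq (fun o : Option ι => o.elim F g)
    (fun o => o.elim t 0) (div_nonneg (norm_nonneg t) hd.le) ((div_lt_iff₀ hd).2 hr) fun a => by
      simp only [Fintype.sum_option, Option.elim_none, Option.elim_some, Pi.zero_apply, mul_zero,
        Finset.sum_const_zero, add_zero, norm_mul]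
      calc ‖a none‖ * ‖t‖ = ‖t‖ / Metric.infDist F W * (‖a none‖ * Metric.infDist F W) := by
            field_simp
        _ ≤ ‖t‖ / Metric.infDist F W * ‖a none • F + ∑ j, a (some j) • g j‖ := by
          gcongr
          exact norm_mul_infDist_le_norm_smul_add W F _ (W.sum_mem fun j _ => W.smul_mem _ (hg j))
  exact ⟨x, hx, hxF none, fun j => hxF (some j)⟩

end Helly

open Finset in
theorem exists_seqs_of_forall_finset_exists {α β : Type*} [DecidableEq α] [DecidableEq β]
    {P : Finset α → β → Prop} {Q : Finset β → α → Prop}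
    (hP : ∀ s, ∃ b, P s b) (hQ : ∀ t, ∃ a, Q t a) :
    ∃ (u : ℕ → α) (v : ℕ → β),
      ∀ n, P ((range n).image u) (v n) ∧ Q ((range (n + 1)).image v) (u n) := by
  choose p hp using hP
  choose q hq using hQ
  let step (s : Finset α × Finset β) : Finset α × Finset β :=
    (insert (q (insert (p s.1) s.2)) s.1, insert (p s.1) s.2)
  let S (n : ℕ) := step^[n] (∅, ∅)
  let v (n : ℕ) := p (S n).1
  let u (n : ℕ) := q (insert (v n) (S n).2)
  have hS (n : ℕ) : (S n).1 = (range n).image u ∧ (S n).2 = (range n).image v := by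
    induction n with
    | zero => exact ⟨rfl, rfl⟩
    | succ n ih =>
      rw [range_add_one, image_insert, image_insert, ← ih.1, ← ih.2]
      simp only [S, Function.iterate_succ_apply']
      exact ⟨rfl, rfl⟩
  refine ⟨u, v, fun n => ⟨?_, ?_⟩⟩
  · rw [← (hS n).1]
    exact hp _
  · rw [range_add_one, image_insert, ← (hS n).2]
    exact hq _

/-- James's characterization: in a non-reflexive Banach space, for every θ ∈ (0,1) there
are sequences (u_n) in the unit ball and (u*_n) in the dual unit ball with
u*_n(u_k) = θ for n ≤ k and u*_n(u_k) = 0 for n > k. -/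
theorem james_nonreflexive_sequences
    (X : Type*) [NormedAddCommGroup X] [NormedSpace ℝ X] [CompleteSpace X]
    (hnr : ¬ Function.Surjective ⇑(NormedSpace.inclusionInDoubleDual ℝ X))
    (θ : ℝ) (hθ0 : 0 < θ) (hθ1 : θ < 1) :
    ∃ (u : ℕ → X) (φ : ℕ → StrongDual ℝ X),
      (∀ n, ‖u n‖ ≤ 1) ∧ (∀ n, ‖φ n‖ ≤ 1) ∧
      (∀ n k, n ≤ k → φ n (u k) = θ) ∧ (∀ n k, k < n → φ n (u k) = 0) := by
  classical
  let J := NormedSpace.inclusionInDoubleDual ℝ X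
  let W : Submodule ℝ (StrongDual ℝ (StrongDual ℝ X)) := J.range
  have hW : IsClosed (W : Set (StrongDual ℝ (StrongDual ℝ X))) := by
    have hJ : Isometry J := (NormedSpace.inclusionInDoubleDualLi ℝ).isometry
    exact hJ.isClosedEmbedding.isClosed_range
  have hWX : ∃ F, F ∉ W := by simpa [W, Function.Surjective] using hnr
  obtain ⟨F, hF1, hFW⟩ := exists_norm_lt_one_lt_infDist (𝕜 := ℝ)
    (E := StrongDual ℝ (StrongDual ℝ X)) hW hWX hθ1
  obtain ⟨u, φ, h⟩ := exists_seqs_of_forall_finset_exists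
    (P := fun s ψ => ‖ψ‖ ≤ 1 ∧ F ψ = θ ∧ ∀ x ∈ s, ψ x = 0)
    (Q := fun t x => ‖x‖ ≤ 1 ∧ ∀ ψ ∈ t, ψ x = F ψ)
    (fun s => by
      obtain ⟨ψ, hψ1, hψF, hψs⟩ := exists_norm_lt_apply_eq_forall_apply_eq_zero W F
        (fun x : s => J x) (fun x => LinearMap.mem_range_self _ _) θ
        (by rwa [Real.norm_of_nonneg hθ0.le, one_mul])
      exact ⟨ψ, hψ1.le, hψF, fun x hx => hψs ⟨x, hx⟩⟩)
    (fun t => by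
      obtain ⟨x, hx1, hxt⟩ := exists_norm_lt_forall_apply_eq_doubleDual F (fun ψ : t => ψ) hF1
      exact ⟨x, hx1.le, fun ψ hψ => hxt ⟨ψ, hψ⟩⟩)
  refine ⟨u, φ, fun n => (h n).2.1, fun n => (h n).1.1, fun n k hnk => ?_, fun n k hkn => ?_⟩
  · rw [(h k).2.2 _ (Finset.mem_image_of_mem _ (Finset.mem_range.2 (Nat.lt_succ_of_le hnk))),
      (h n).1.2.1]
  · exact (h n).1.2.2 _ (Finset.mem_image_of_mem _ (Finset.mem_range.2 hkn))
end

section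
/- Let X be a Banach space, θ ∈ (0,1), and suppose (u_n) ⊆ B_X and (u*_n) ⊆ B_{X*} satisfy u*_n(u_k) = θ for n ≤ k and u*_n(u_k) = 0 for n > k. Then for all finite subsets J = {n_1 < ... < n_k} and J' = {m_1 < ... < m_l} of ℕ with max J < min J', setting v_J = Σ_{n∈J} u_n and v_{J'} = Σ_{m∈J'} u_m, we have (θ/3)(k+l) ≤ ‖v_J − v_{J'}‖ ≤ k+l. -/
/-!
Testing `v = v_J - v_{J'}` against `u*_{m}` with `m = min J'` kills `v_J` and gives `θ l`, while
testing it against `u*_{n}` with `n = min (J ∪ J')` gives `θ (k - l)`. Since the functionals have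
norm at most one, `‖v‖ ≥ |θ| max (l, |k - l|) ≥ |θ| (k + l) / 3`. The upper bound is the triangle
inequality.
-/

open Finset

lemma norm_sum_sub_sum_le_card_add_card {ι X : Type*} [SeminormedAddCommGroup X] {u : ι → X}
    (hu : ∀ n, ‖u n‖ ≤ 1) (J J' : Finset ι) :
    ‖(∑ n ∈ J, u n) - ∑ m ∈ J', u m‖ ≤ #J + #J' :=
  calc ‖(∑ n ∈ J, u n) - ∑ m ∈ J', u m‖ ≤ ‖∑ n ∈ J, u n‖ + ‖∑ m ∈ J', u m‖ := norm_sub_le _ _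
    _ ≤ (∑ _n ∈ J, (1 : ℝ)) + ∑ _m ∈ J', (1 : ℝ) :=
      add_le_add (norm_sum_le_of_le J fun n _ ↦ hu n) (norm_sum_le_of_le J' fun m _ ↦ hu m)
    _ = #J + #J' := by simp

lemma abs_apply_le_norm_of_norm_le_one {X : Type*} [SeminormedAddCommGroup X] [NormedSpace ℝ X]
    {f : StrongDual ℝ X} (hf : ‖f‖ ≤ 1) (x : X) : |f x| ≤ ‖x‖ := by
  simpa using f.le_of_opNorm_le hf x

namespace JamesSystem

variable {X : Type*} [SeminormedAddCommGroup X] [NormedSpace ℝ X]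
  {θ : ℝ} {u : ℕ → X} {φ : ℕ → StrongDual ℝ X}

lemma apply_sum_of_le (h1 : ∀ n k, n ≤ k → φ n (u k) = θ) {n : ℕ} {s : Finset ℕ}
    (hs : ∀ k ∈ s, n ≤ k) : φ n (∑ k ∈ s, u k) = #s * θ := by
  rw [map_sum, sum_eq_card_nsmul fun k hk ↦ h1 n k (hs k hk), nsmul_eq_mul]

lemma apply_sum_of_lt (h2 : ∀ n k, k < n → φ n (u k) = 0) {n : ℕ} {s : Finset ℕ}
    (hs : ∀ k ∈ s, k < n) : φ n (∑ k ∈ s, u k) = 0 := by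
  rw [map_sum]
  exact sum_eq_zero fun k hk ↦ h2 n k (hs k hk)

variable (hφ : ∀ n, ‖φ n‖ ≤ 1) (h1 : ∀ n k, n ≤ k → φ n (u k) = θ)
include hφ h1

lemma abs_mul_card_le_norm_sum_sub_sum (h2 : ∀ n k, k < n → φ n (u k) = 0)
    {J J' : Finset ℕ} (hlt : ∀ n ∈ J, ∀ m ∈ J', n < m) :
    |θ| * #J' ≤ ‖(∑ n ∈ J, u n) - ∑ m ∈ J', u m‖ := by
  rcases J'.eq_empty_or_nonempty with rfl | hJ'
  · simp
  set m := J'.min' hJ'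
  have hm : φ m ((∑ n ∈ J, u n) - ∑ m ∈ J', u m) = -(#J' * θ) := by
    rw [map_sub, apply_sum_of_lt h2 fun n hn ↦ hlt n hn m (J'.min'_mem hJ'),
      apply_sum_of_le h1 fun k hk ↦ J'.min'_le k hk, zero_sub]
  calc |θ| * #J' = |φ m ((∑ n ∈ J, u n) - ∑ m ∈ J', u m)| := by simp [hm, abs_mul, mul_comm]
    _ ≤ _ := abs_apply_le_norm_of_norm_le_one (hφ m) _

lemma abs_mul_abs_card_sub_card_le_norm_sum_sub_sum (J J' : Finset ℕ) :
    |θ| * |(#J : ℝ) - #J'| ≤ ‖(∑ n ∈ J, u n) - ∑ m ∈ J', u m‖ := by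
  rcases (J ∪ J').eq_empty_or_nonempty with hJJ' | hJJ'
  · obtain ⟨rfl, rfl⟩ := union_eq_empty.mp hJJ'
    simp
  set n := (J ∪ J').min' hJJ'
  have hn : φ n ((∑ n ∈ J, u n) - ∑ m ∈ J', u m) = (#J - #J') * θ := by
    rw [map_sub, apply_sum_of_le h1 fun k hk ↦ (J ∪ J').min'_le k (mem_union_left J' hk),
      apply_sum_of_le h1 fun k hk ↦ (J ∪ J').min'_le k (mem_union_right J hk), sub_mul]
  calc |θ| * |(#J : ℝ) - #J'| = |φ n ((∑ n ∈ J, u n) - ∑ m ∈ J', u m)| := by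
        rw [hn, abs_mul, mul_comm]
    _ ≤ _ := abs_apply_le_norm_of_norm_le_one (hφ n) _

end JamesSystem

theorem james_difference_norm_bounds_general
    {X : Type*} [NormedAddCommGroup X] [NormedSpace ℝ X]
    (θ : ℝ)
    (u : ℕ → X) (φ : ℕ → StrongDual ℝ X)
    (hu : ∀ n, ‖u n‖ ≤ 1) (hφ : ∀ n, ‖φ n‖ ≤ 1)
    (h1 : ∀ n k, n ≤ k → φ n (u k) = θ) (h2 : ∀ n k, k < n → φ n (u k) = 0)
    (J J' : Finset ℕ) (hlt : ∀ n ∈ J, ∀ m ∈ J', n < m) :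
    (θ / 3) * (J.card + J'.card) ≤ ‖(∑ n ∈ J, u n) - ∑ m ∈ J', u m‖ ∧
      ‖(∑ n ∈ J, u n) - ∑ m ∈ J', u m‖ ≤ J.card + J'.card := by
  refine ⟨?_, norm_sum_sub_sum_le_card_add_card hu J J'⟩
  have hl := JamesSystem.abs_mul_card_le_norm_sum_sub_sum hφ h1 h2 hlt
  have hkl := JamesSystem.abs_mul_abs_card_sub_card_le_norm_sum_sub_sum hφ h1 J J'
  have hsplit : |θ| * (#J + #J') ≤ |θ| * |(#J : ℝ) - #J'| + 2 * (|θ| * #J') := by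
    have := mul_le_mul_of_nonneg_left (le_abs_self ((#J : ℝ) - #J')) (abs_nonneg θ)
    linarith
  have hθ : θ * (#J + #J') ≤ |θ| * (#J + #J') :=
    mul_le_mul_of_nonneg_right (le_abs_self θ) (by positivity)
  linarith

/-- For James sequences and finite sets J, J' with max J < min J',
(θ/3)(|J|+|J'|) ≤ ‖v_J − v_{J'}‖ ≤ |J|+|J'|. -/
theorem james_difference_norm_bounds
    {X : Type*} [NormedAddCommGroup X] [NormedSpace ℝ X]
    (θ : ℝ) (hθ0 : 0 < θ) (hθ1 : θ < 1)
    (u : ℕ → X) (φ : ℕ → StrongDual ℝ X)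
    (hu : ∀ n, ‖u n‖ ≤ 1) (hφ : ∀ n, ‖φ n‖ ≤ 1)
    (h1 : ∀ n k, n ≤ k → φ n (u k) = θ) (h2 : ∀ n k, k < n → φ n (u k) = 0)
    (J J' : Finset ℕ) (hlt : ∀ n ∈ J, ∀ m ∈ J', n < m) :
    (θ / 3) * (J.card + J'.card) ≤ ‖(∑ n ∈ J, u n) - ∑ m ∈ J', u m‖ ∧
      ‖(∑ n ∈ J, u n) - ∑ m ∈ J', u m‖ ≤ J.card + J'.card :=
  james_difference_norm_bounds_general θ u φ hu hφ h1 h2 J J' hlt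
end

section
/- For any infinite-dimensional Banach space X and any t ∈ (0, 1/2], the (β)-modulus of X at t is at most the modulus of asymptotic uniform convexity of X at 2t: β̄_X(t) ≤ δ̄_X(2t). -/
/-!
Given `δ̄_X(2t) < D ≤ 1`, fix a unit vector `x₀` witnessing this and a norm-one functional `f₀`
with `f₀ x₀ = 1`. Every closed finite-codimensional subspace contains some `z` with `‖z‖ ≥ 2t` and
`‖x₀ + z‖ < 1 + D`. Taking the subspace to be `ker f₀` intersected with the kernels of norming
functionals of the vectors chosen so far, one builds a `2t`-separated sequence `zₙ ∈ ker f₀` of such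
vectors. The points `xₙ = (x₀ + zₙ) / (1 + D)` lie in the unit ball, are `t`-separated, and
`‖x₀ + xₙ‖ ≥ f₀ (x₀ + xₙ) = 1 + 1 / (1 + D) ≥ 2 - D`, whence `β̄_X(t) ≤ D / 2`.
-/

/-- The (β)-modulus of a Banach space `X` at `t`. -/
noncomputable def betaMod (X : Type*) [NormedAddCommGroup X] (t : ℝ) : ℝ :=
  1 - sSup {r : ℝ | ∃ (x : X) (xs : ℕ → X), ‖x‖ ≤ 1 ∧ (∀ n, ‖xs n‖ ≤ 1) ∧
    (∀ n m, n ≠ m → t ≤ ‖xs n - xs m‖) ∧ r = ⨅ n, ‖x + xs n‖ / 2}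

/-- The modulus of asymptotic uniform convexity of `X` at `t`. -/
noncomputable def aucMod (X : Type*) [NormedAddCommGroup X] [NormedSpace ℝ X] (t : ℝ) : ℝ :=
  ⨅ x : {x : X // ‖x‖ = 1},
    ⨆ Y : {Y : Submodule ℝ X // IsClosed (Y : Set X) ∧ FiniteDimensional ℝ (X ⧸ Y)},
      ⨅ z : {z : X // z ∈ Y.val ∧ t ≤ ‖z‖}, (‖x.val + z.val‖ - 1)

section ClosedFiniteCodim

variable {X : Type*} [NormedAddCommGroup X] [NormedSpace ℝ X]

theorem ContinuousLinearMap.apply_le_norm_of_norm_le_one {f : StrongDual ℝ X} (hf : ‖f‖ ≤ 1)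
    (v : X) : f v ≤ ‖v‖ :=
  (Real.le_norm_self _).trans ((f.le_of_opNorm_le hf v).trans_eq (one_mul _))

def Submodule.IsClosedFiniteCodim (Y : Submodule ℝ X) : Prop :=
  IsClosed (Y : Set X) ∧ FiniteDimensional ℝ (X ⧸ Y)

theorem ContinuousLinearMap.isClosedFiniteCodim_ker {E : Type*} [NormedAddCommGroup E]
    [NormedSpace ℝ E] [FiniteDimensional ℝ E] (L : X →L[ℝ] E) :
    (LinearMap.ker (L : X →ₗ[ℝ] E)).IsClosedFiniteCodim :=
  ⟨L.isClosed_ker, (L : X →ₗ[ℝ] E).quotKerEquivRange.symm.finiteDimensional⟩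

theorem Submodule.IsClosedFiniteCodim.inf {Y₁ Y₂ : Submodule ℝ X} (h₁ : Y₁.IsClosedFiniteCodim)
    (h₂ : Y₂.IsClosedFiniteCodim) : (Y₁ ⊓ Y₂).IsClosedFiniteCodim := by
  have := h₁.2
  have := h₂.2
  refine ⟨h₁.1.inter h₂.1, ?_⟩
  rw [← Y₁.ker_mkQ, ← Y₂.ker_mkQ, ← LinearMap.ker_prod]
  exact (Y₁.mkQ.prod Y₂.mkQ).quotKerEquivRange.symm.finiteDimensional

theorem Submodule.IsClosedFiniteCodim.exists_norm_eq (hinf : ¬ FiniteDimensional ℝ X)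
    {Y : Submodule ℝ X} (hY : Y.IsClosedFiniteCodim) {c : ℝ} (hc : 0 ≤ c) :
    ∃ z ∈ Y, ‖z‖ = c := by
  have := hY.2
  have : Nontrivial Y := by
    refine Y.nontrivial_iff_ne_bot.mpr fun hbot => hinf ?_
    exact (Y.quotEquivOfEqBot hbot).finiteDimensional
  obtain ⟨z, hz⟩ := _root_.exists_norm_eq Y hc
  exact ⟨z, z.2, hz⟩

theorem exists_seq_pairwise_le_norm_sub {S : Set X} {c : ℝ} (hSc : ∀ z ∈ S, c ≤ ‖z‖)
    (hS : ∀ Y : Submodule ℝ X, Y.IsClosedFiniteCodim → ∃ z ∈ Y, z ∈ S) :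
    ∃ z : ℕ → X, (∀ n, z n ∈ S) ∧ Pairwise fun n m => c ≤ ‖z n - z m‖ := by
  choose F hF_norm hF_apply using fun a : X => exists_dual_vector'' ℝ a
  simp only [RCLike.ofReal_real_eq_id, id] at hF_apply
  have : Std.Symm fun a b : X => c ≤ ‖a - b‖ := ⟨fun a b h => by rwa [norm_sub_rev]⟩
  refine exists_seq_of_forall_finset_exists' (· ∈ S) (fun a b => c ≤ ‖a - b‖) fun s hs => ?_
  let L : X →L[ℝ] (s → ℝ) := ContinuousLinearMap.pi fun a => F a
  obtain ⟨w, hwL, hwS⟩ := hS _ L.isClosedFiniteCodim_ker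
  refine ⟨w, hwS, fun a ha => ?_⟩
  have hFw : F a w = 0 := congr_fun (LinearMap.mem_ker.mp hwL) ⟨a, ha⟩
  calc c ≤ ‖a‖ := hSc a (hs a ha)
    _ = F a (a - w) := by rw [map_sub, hFw, sub_zero, hF_apply]
    _ ≤ ‖a - w‖ := (F a).apply_le_norm_of_norm_le_one (hF_norm a) _

end ClosedFiniteCodim

section Moduli

variable {X : Type*} [NormedAddCommGroup X]

theorem betaMod_le_one (t : ℝ) : betaMod X t ≤ 1 := by
  rw [betaMod, sub_le_self_iff]
  refine Real.sSup_nonneg ?_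
  rintro r ⟨x, xs, -, -, -, rfl⟩
  exact Real.iInf_nonneg fun n => by positivity

theorem betaMod_le_of_le_iInf {t r : ℝ} (x : X) (xs : ℕ → X) (hx : ‖x‖ ≤ 1)
    (hxs : ∀ n, ‖xs n‖ ≤ 1) (hsep : ∀ n m, n ≠ m → t ≤ ‖xs n - xs m‖)
    (hr : ∀ n, r ≤ ‖x + xs n‖ / 2) : betaMod X t ≤ 1 - r := by
  have hbdd : BddAbove {r : ℝ | ∃ (x : X) (xs : ℕ → X), ‖x‖ ≤ 1 ∧ (∀ n, ‖xs n‖ ≤ 1) ∧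
      (∀ n m, n ≠ m → t ≤ ‖xs n - xs m‖) ∧ r = ⨅ n, ‖x + xs n‖ / 2} := by
    refine ⟨1, ?_⟩
    rintro _ ⟨y, ys, hy, hys, -, rfl⟩
    refine (ciInf_le ⟨0, ?_⟩ 0).trans ?_
    · rintro _ ⟨n, rfl⟩
      positivity
    · linarith [norm_add_le y (ys 0), hys 0]
  exact sub_le_sub_left ((le_ciInf hr).trans (le_csSup hbdd ⟨x, xs, hx, hxs, hsep, rfl⟩)) 1

variable [NormedSpace ℝ X]

theorem betaMod_le_of_forall_isClosedFiniteCodim {t D : ℝ} (ht : 0 ≤ t) (hD : D ≤ 1) {x₀ : X}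
    (hx₀ : ‖x₀‖ = 1) (hY : ∀ Y : Submodule ℝ X, Y.IsClosedFiniteCodim →
      ∃ z ∈ Y, 2 * t ≤ ‖z‖ ∧ ‖x₀ + z‖ < 1 + D) :
    betaMod X t ≤ D := by
  obtain ⟨f₀, hf₀_norm, hf₀x₀⟩ := exists_dual_vector'' ℝ x₀
  rw [hx₀, RCLike.ofReal_real_eq_id, id] at hf₀x₀
  have hf₀_le := f₀.apply_le_norm_of_norm_le_one hf₀_norm
  obtain ⟨z, hzS, hz_sep⟩ := exists_seq_pairwise_le_norm_sub
    (S := {z | f₀ z = 0 ∧ 2 * t ≤ ‖z‖ ∧ ‖x₀ + z‖ < 1 + D}) (fun z hz => hz.2.1) fun Y hYc => by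
      obtain ⟨z, hzYK, hz⟩ := hY _ (hYc.inf f₀.isClosedFiniteCodim_ker)
      exact ⟨z, (Submodule.mem_inf.mp hzYK).1, (Submodule.mem_inf.mp hzYK).2, hz⟩
  have hf₀z : ∀ n, f₀ (z n) = 0 := fun n => (hzS n).1
  have hD0 : 0 < D := by
    have := hf₀_le (x₀ + z 0)
    rw [map_add, hf₀x₀, hf₀z, add_zero] at this
    linarith [(hzS 0).2.2]
  set s := (1 + D)⁻¹ with hs
  have hs0 : 0 < s := by positivity
  have hs_ge : 1 - s ≤ D := by
    have hs1 : s ≤ 1 := inv_le_one_of_one_le₀ (by linarith)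
    have hsD : s * (1 + D) = 1 := inv_mul_cancel₀ (by linarith)
    nlinarith [mul_le_mul_of_nonneg_left hs1 hD0.le]
  refine (betaMod_le_of_le_iInf (r := (1 + s) / 2) x₀ (fun n => s • (x₀ + z n)) hx₀.le
    (fun n => ?_) (fun n m hnm => ?_) fun n => ?_).trans (by linarith)
  · rw [norm_smul, Real.norm_of_nonneg hs0.le, hs, inv_mul_le_one₀ (by linarith)]
    exact (hzS n).2.2.le
  · rw [← smul_sub, add_sub_add_left_eq_sub, norm_smul, Real.norm_of_nonneg hs0.le]
    calc t ≤ s * (2 * t) := by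
          rw [hs, ← div_eq_inv_mul, le_div_iff₀ (by linarith)]
          nlinarith
      _ ≤ s * ‖z n - z m‖ := mul_le_mul_of_nonneg_left (hz_sep hnm) hs0.le
  · have := hf₀_le (x₀ + s • (x₀ + z n))
    rw [map_add, map_smul, map_add, hf₀x₀, hf₀z, add_zero, smul_eq_mul, mul_one] at this
    linarith

theorem exists_forall_isClosedFiniteCodim_of_aucMod_lt (hinf : ¬ FiniteDimensional ℝ X)
    {c D : ℝ} (hc : 0 ≤ c) (hD : aucMod X c < D) :
    ∃ x₀ : X, ‖x₀‖ = 1 ∧ ∀ Y : Submodule ℝ X, Y.IsClosedFiniteCodim →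
      ∃ z ∈ Y, c ≤ ‖z‖ ∧ ‖x₀ + z‖ < 1 + D := by
  have htop : (⊤ : Submodule ℝ X).IsClosedFiniteCodim := by
    simpa using (0 : X →L[ℝ] ℝ).isClosedFiniteCodim_ker
  obtain ⟨u, -, hu⟩ := htop.exists_norm_eq hinf zero_le_one
  have : Nonempty {x : X // ‖x‖ = 1} := ⟨⟨u, hu⟩⟩
  obtain ⟨⟨x₀, hx₀⟩, hx₀D⟩ := exists_lt_of_ciInf_lt hD
  have hne : ∀ Y : Submodule ℝ X, Y.IsClosedFiniteCodim →
      ∃ z : {z : X // z ∈ Y ∧ c ≤ ‖z‖}, ‖z.val‖ = c := fun Y hY =>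
    let ⟨z, hzY, hz⟩ := hY.exists_norm_eq hinf hc
    ⟨⟨z, hzY, hz.ge⟩, hz⟩
  have hbdd : ∀ Y : Submodule ℝ X,
      BddBelow (Set.range fun z : {z : X // z ∈ Y ∧ c ≤ ‖z‖} => ‖x₀ + z.val‖ - 1) :=
    fun Y => ⟨-1, by rintro _ ⟨z, rfl⟩; linarith [norm_nonneg (x₀ + z.val)]⟩
  have hbddY : BddAbove (Set.range fun Y : {Y : Submodule ℝ X // Y.IsClosedFiniteCodim} =>
      ⨅ z : {z : X // z ∈ Y.val ∧ c ≤ ‖z‖}, (‖x₀ + z.val‖ - 1)) := by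
    refine ⟨c, ?_⟩
    rintro _ ⟨⟨Y, hY⟩, rfl⟩
    obtain ⟨z, hz⟩ := hne Y hY
    refine (ciInf_le (hbdd Y) z).trans ?_
    linarith [norm_add_le x₀ z.val]
  refine ⟨x₀, hx₀, fun Y hY => ?_⟩
  have hz : ⨅ z : {z : X // z ∈ Y ∧ c ≤ ‖z‖}, (‖x₀ + z.val‖ - 1) < D :=
    (le_ciSup hbddY ⟨Y, hY⟩).trans_lt hx₀D
  have : Nonempty {z : X // z ∈ Y ∧ c ≤ ‖z‖} := (hne Y hY).nonempty
  obtain ⟨⟨z, hzY, hzc⟩, hzD⟩ := exists_lt_of_ciInf_lt hz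
  exact ⟨z, hzY, hzc, by linarith⟩

end Moduli

theorem betaMod_le_aucMod_general
    (X : Type*) [NormedAddCommGroup X] [NormedSpace ℝ X]
    (hinf : ¬ FiniteDimensional ℝ X)
    (t : ℝ) (ht0 : 0 < t) :
    betaMod X t ≤ aucMod X (2 * t) := by
  refine le_of_forall_gt_imp_ge_of_dense fun D hD => ?_
  rcases le_or_gt 1 D with hD1 | hD1
  · exact (betaMod_le_one t).trans hD1
  obtain ⟨x₀, hx₀, hY⟩ := exists_forall_isClosedFiniteCodim_of_aucMod_lt hinf (by positivity) hD
  exact betaMod_le_of_forall_isClosedFiniteCodim ht0.le hD1.le hx₀ hY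

/-- For an infinite-dimensional Banach space, β̄_X(t) ≤ δ̄_X(2t) for t ∈ (0,1/2]. -/
theorem betaMod_le_aucMod
    (X : Type*) [NormedAddCommGroup X] [NormedSpace ℝ X] [CompleteSpace X]
    (hinf : ¬ FiniteDimensional ℝ X)
    (t : ℝ) (ht0 : 0 < t) (ht1 : t ≤ 1 / 2) :
    betaMod X t ≤ aucMod X (2 * t) :=
  betaMod_le_aucMod_general X hinf t ht0
end

section
/- Let X be an infinite-dimensional Banach space, x a unit vector, and T > 0, ε > 0. Then there exist a sequence (z_n) in X with each z_n in the kernel of a norming functional of x (so ‖x + z_n‖ ≥ 1 for all n in the direction of x*), ‖z_n‖ ≥ T for all n, sep((x + z_n)_{n≥1}) ≥ T, and ‖x + z_n‖ − 1 ≤ δ̄_X(T, x) + ε for all n, where δ̄_X(T,x) = sup over finite-codimensional closed subspaces X_0 of inf{‖x+z‖−1 : z ∈ X_0, ‖z‖ ≥ T}. Moreover x*((2+β)x + z_n) = 2+β for any β, where x* is a norming functional for x. -/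
/-- The quantity δ̄_X(T, x): supremum over closed finite-codimensional subspaces X₀ of
inf{‖x+z‖−1 : z ∈ X₀, ‖z‖ ≥ T}. -/
noncomputable def aucModAt (X : Type*) [NormedAddCommGroup X] [NormedSpace ℝ X]
    (T : ℝ) (x : X) : ℝ :=
  ⨆ Y : {Y : Submodule ℝ X // IsClosed (Y : Set X) ∧ FiniteDimensional ℝ (X ⧸ Y)},
    ⨅ z : {z : X // z ∈ Y.val ∧ T ≤ ‖z‖}, (‖x + z.val‖ - 1)

/-!
Every finite family of functionals cuts out a closed finite-codimensional subspace, which is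
nonzero because `X` is infinite-dimensional; in it some `z` with `‖z‖ ≥ T` nearly attains the
infimum defining `δ̄_X(T, x)`, hence `‖x + z‖ - 1 ≤ δ̄_X(T, x) + ε`. Choosing `z_{n+1}` in the
kernels of `x*` and of norming functionals `z*_1, …, z*_n` of the earlier terms gives
`‖z_n - z_m‖ ≥ z*_n (z_n - z_m) = ‖z_n‖ ≥ T` for `n < m`.
-/

open Finset

theorem Submodule.ne_bot_of_finiteDimensional_quotient {K V : Type*} [DivisionRing K]
    [AddCommGroup V] [Module K V] (hinf : ¬ FiniteDimensional K V) {Y : Submodule K V}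
    [FiniteDimensional K (V ⧸ Y)] : Y ≠ ⊥ := by
  rintro rfl
  exact hinf (Submodule.quotEquivOfEqBot ⊥ rfl).finiteDimensional

theorem LinearMap.finiteDimensional_quotient_ker {K V W : Type*} [DivisionRing K]
    [AddCommGroup V] [Module K V] [AddCommGroup W] [Module K W] [FiniteDimensional K W]
    (g : V →ₗ[K] W) : FiniteDimensional K (V ⧸ LinearMap.ker g) :=
  g.quotKerEquivRange.symm.finiteDimensional

theorem exists_seq_norm_le_norm_sub {𝕜 X : Type*} [RCLike 𝕜] [NormedAddCommGroup X]
    [NormedSpace 𝕜 X] (S : Set X)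
    (hS : ∀ s : Finset (StrongDual 𝕜 X), ∃ z ∈ S, ∀ f ∈ s, f z = 0) :
    ∃ z : ℕ → X, (∀ n, z n ∈ S) ∧ ∀ m n, m < n → ‖z m‖ ≤ ‖z m - z n‖ := by
  classical
  obtain ⟨p, hpS, hp_ker⟩ := exists_seq_of_forall_finset_exists
    (fun p : X × StrongDual 𝕜 X => p.1 ∈ S ∧ ‖p.2‖ ≤ 1 ∧ p.2 p.1 = ‖p.1‖)
    (fun p q => p.2 q.1 = 0) fun s _ => by
      obtain ⟨z, hzS, hz⟩ := hS (s.image Prod.snd)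
      obtain ⟨g, hg_norm, hg_z⟩ := exists_dual_vector'' 𝕜 z
      exact ⟨(z, g), ⟨hzS, hg_norm, hg_z⟩, fun q hq => hz q.2 (mem_image_of_mem _ hq)⟩
  refine ⟨fun n => (p n).1, fun n => (hpS n).1, fun m n hmn => ?_⟩
  obtain ⟨-, hg_norm, hg_z⟩ := hpS m
  calc ‖(p m).1‖ = ‖(p m).2 ((p m).1 - (p n).1)‖ := by
        rw [map_sub, hp_ker m n hmn, sub_zero, hg_z, RCLike.norm_ofReal, abs_norm]
    _ ≤ ‖(p m).1 - (p n).1‖ := (p m).2.le_of_opNorm_le hg_norm _ |>.trans_eq (one_mul _)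

section aucModAt

variable {X : Type*} [NormedAddCommGroup X] [NormedSpace ℝ X]

theorem exists_mem_norm_eq_of_finiteDimensional_quotient (hinf : ¬ FiniteDimensional ℝ X)
    {T : ℝ} (hT : 0 ≤ T) (Y : Submodule ℝ X) [FiniteDimensional ℝ (X ⧸ Y)] :
    ∃ z ∈ Y, ‖z‖ = T := by
  have := Submodule.nontrivial_iff_ne_bot.2 (Y.ne_bot_of_finiteDimensional_quotient hinf)
  obtain ⟨z, hz⟩ := exists_norm_eq Y hT
  exact ⟨z, z.2, hz⟩

theorem iInf_norm_add_sub_one_le_aucModAt (hinf : ¬ FiniteDimensional ℝ X) (x : X) {T : ℝ}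
    (hT : 0 ≤ T) (Y : Submodule ℝ X) (hY : IsClosed (Y : Set X))
    [FiniteDimensional ℝ (X ⧸ Y)] :
    ⨅ z : {z : X // z ∈ Y ∧ T ≤ ‖z‖}, (‖x + z.val‖ - 1) ≤ aucModAt X T x := by
  refine le_ciSup (f := fun Y : {Y : Submodule ℝ X // IsClosed (Y : Set X) ∧
    FiniteDimensional ℝ (X ⧸ Y)} => ⨅ z : {z : X // z ∈ Y.val ∧ T ≤ ‖z‖}, (‖x + z.val‖ - 1))
    ⟨‖x‖ + T - 1, ?_⟩ ⟨Y, hY, ‹_›⟩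
  rintro _ ⟨⟨Y', -, hY'⟩, rfl⟩
  obtain ⟨z, hzY', hz⟩ := exists_mem_norm_eq_of_finiteDimensional_quotient hinf hT Y'
  have hbdd : BddBelow (Set.range fun z : {z : X // z ∈ Y' ∧ T ≤ ‖z‖} => ‖x + z.val‖ - 1) :=
    ⟨-1, by rintro _ ⟨z, rfl⟩; simp⟩
  calc _ ≤ ‖x + z‖ - 1 := ciInf_le hbdd ⟨z, hzY', hz.ge⟩
    _ ≤ ‖x‖ + T - 1 := by linarith [norm_add_le x z]

theorem exists_forall_apply_eq_zero_norm_add_sub_one_le (hinf : ¬ FiniteDimensional ℝ X)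
    (x : X) {T ε : ℝ} (hT : 0 ≤ T) (hε : 0 < ε) (s : Finset (StrongDual ℝ X)) :
    ∃ z : X, (∀ f ∈ s, f z = 0) ∧ T ≤ ‖z‖ ∧ ‖x + z‖ - 1 ≤ aucModAt X T x + ε := by
  let g : X →L[ℝ] (s → ℝ) := ContinuousLinearMap.pi fun f => (f : StrongDual ℝ X)
  let Y : Submodule ℝ X := LinearMap.ker (g : X →ₗ[ℝ] (s → ℝ))
  have : FiniteDimensional ℝ (X ⧸ Y) := LinearMap.finiteDimensional_quotient_ker _
  obtain ⟨z₀, hz₀Y, hz₀⟩ := exists_mem_norm_eq_of_finiteDimensional_quotient hinf hT Y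
  have : Nonempty {z : X // z ∈ Y ∧ T ≤ ‖z‖} := ⟨⟨z₀, hz₀Y, hz₀.ge⟩⟩
  obtain ⟨⟨z, hzY, hzT⟩, hz⟩ := exists_lt_of_ciInf_lt (lt_add_of_pos_right
    (⨅ z : {z : X // z ∈ Y ∧ T ≤ ‖z‖}, (‖x + z.val‖ - 1)) hε)
  refine ⟨z, fun f hf => congrFun (LinearMap.mem_ker.1 hzY) ⟨f, hf⟩, hzT, ?_⟩
  linarith [iInf_norm_add_sub_one_le_aucModAt hinf x hT Y g.isClosed_ker]

end aucModAt

theorem auc_separated_sequence_general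
    (X : Type*) [NormedAddCommGroup X] [NormedSpace ℝ X]
    (hinf : ¬ FiniteDimensional ℝ X)
    (x : X) (hx : ‖x‖ = 1) (T ε : ℝ) (hT : 0 < T) (hε : 0 < ε) :
    ∃ xstar : StrongDual ℝ X, ‖xstar‖ = 1 ∧ xstar x = 1 ∧
      ∃ z : ℕ → X,
        (∀ n, xstar (z n) = 0) ∧
        (∀ n, 1 ≤ ‖x + z n‖) ∧
        (∀ n, T ≤ ‖z n‖) ∧
        (∀ n m, n ≠ m → T ≤ ‖(x + z n) - (x + z m)‖) ∧
        (∀ n, ‖x + z n‖ - 1 ≤ aucModAt X T x + ε) ∧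
        (∀ β : ℝ, ∀ n, xstar ((2 + β) • x + z n) = 2 + β) := by
  classical
  obtain ⟨xstar, hxstar, hxstar_x⟩ := exists_dual_vector ℝ x (by simp [hx])
  replace hxstar_x : xstar x = 1 := by simpa [hx] using hxstar_x
  obtain ⟨z, hzS, hz_sep⟩ := exists_seq_norm_le_norm_sub
    {z | xstar z = 0 ∧ T ≤ ‖z‖ ∧ ‖x + z‖ - 1 ≤ aucModAt X T x + ε} fun s => by
      obtain ⟨z, hz_ker, hzT, hz⟩ :=
        exists_forall_apply_eq_zero_norm_add_sub_one_le hinf x hT.le hε (insert xstar s)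
      exact ⟨z, ⟨hz_ker _ (mem_insert_self _ _), hzT, hz⟩,
        fun f hf => hz_ker f (mem_insert_of_mem hf)⟩
  refine ⟨xstar, hxstar, hxstar_x, z, fun n => (hzS n).1, fun n => ?_, fun n => (hzS n).2.1,
    fun n m hnm => ?_, fun n => (hzS n).2.2, fun β n => by simp [(hzS n).1, hxstar_x]⟩
  · calc (1 : ℝ) = xstar (x + z n) := by simp [(hzS n).1, hxstar_x]
      _ ≤ ‖x + z n‖ := (le_abs_self _).trans <|
        (xstar.le_of_opNorm_le hxstar.le _).trans_eq (one_mul _)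
  · rw [add_sub_add_left_eq_sub]
    rcases hnm.lt_or_gt with h | h
    · exact (hzS n).2.1.trans (hz_sep n m h)
    · exact (hzS m).2.1.trans ((hz_sep m n h).trans_eq (norm_sub_rev _ _))

/-- Construction of a well-separated sequence x + z_n in the kernel of a norming
functional of x, almost attaining δ̄_X(T,x). -/
theorem auc_separated_sequence
    (X : Type*) [NormedAddCommGroup X] [NormedSpace ℝ X] [CompleteSpace X]
    (hinf : ¬ FiniteDimensional ℝ X)
    (x : X) (hx : ‖x‖ = 1) (T ε : ℝ) (hT : 0 < T) (hε : 0 < ε) :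
    ∃ xstar : StrongDual ℝ X, ‖xstar‖ = 1 ∧ xstar x = 1 ∧
      ∃ z : ℕ → X,
        (∀ n, xstar (z n) = 0) ∧
        (∀ n, 1 ≤ ‖x + z n‖) ∧
        (∀ n, T ≤ ‖z n‖) ∧
        (∀ n m, n ≠ m → T ≤ ‖(x + z n) - (x + z m)‖) ∧
        (∀ n, ‖x + z n‖ - 1 ≤ aucModAt X T x + ε) ∧
        (∀ β : ℝ, ∀ n, xstar ((2 + β) • x + z n) = 2 + β) :=
  auc_separated_sequence_general X hinf x hx T ε hT hε
end

section
/- Let T and M be rooted graphs with shortest path metrics in which every vertex v satisfies d(root, v) = level(v), and let φ : T → M be a level-preserving map that sends each vertex's immediate descendants to immediate descendants of its image. Then for any two vertices n, m of T with a common closest ancestor o, d_M(φ(n), φ(m)) ≤ d_T(n, m); i.e., φ is 1-Lipschitz. [Specifically, this holds for the map φ from the infinitely branching tree T_∞ of finite subsets of ℕ to the Laakso-type space M_∞ defined in the paper.] -/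
/-- A level-preserving map between connected rooted graphs that sends immediate
descendants to immediate descendants is 1-Lipschitz for the shortest path metrics. -/
theorem level_preserving_map_one_lipschitz
    {VT VM : Type*} (T : SimpleGraph VT) (M : SimpleGraph VM)
    (rootT : VT) (rootM : VM) (hT : T.Connected) (hM : M.Connected)
    (φ : VT → VM)
    (hlevel : ∀ v : VT, M.dist rootM (φ v) = T.dist rootT v)
    (hedge : ∀ v w : VT, T.Adj v w →
      T.dist rootT w = T.dist rootT v + 1 ∨ T.dist rootT v = T.dist rootT w + 1)
    (hdesc : ∀ v w : VT, T.Adj v w → T.dist rootT w = T.dist rootT v + 1 →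
      M.Adj (φ v) (φ w)) :
    ∀ n m : VT, M.dist (φ n) (φ m) ≤ T.dist n m := by
  have hadj : ∀ v w : VT, T.Adj v w → M.Adj (φ v) (φ w) := by
    intro v w h
    rcases hedge v w h with h1 | h1
    · exact hdesc v w h h1
    · exact (hdesc w v h.symm h1).symm
  have key : ∀ (n m : VT) (p : T.Walk n m), M.dist (φ n) (φ m) ≤ p.length := by
    intro n m p
    induction p with
    | nil => simp
    | cons h p ih =>
      calc M.dist (φ _) (φ _) ≤ M.dist (φ _) (φ _) + M.dist (φ _) (φ _) :=
            hM.dist_triangle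
        _ ≤ 1 + p.length := by
            exact Nat.add_le_add
              (SimpleGraph.dist_eq_one_iff_adj.mpr (hadj _ _ h)).le ih
        _ = _ := by simp [SimpleGraph.Walk.length_cons, Nat.add_comm]
  intro n m
  obtain ⟨p, hp⟩ := (hT n m).exists_walk_length_eq_dist
  calc M.dist (φ n) (φ m) ≤ p.length := key n m p
    _ = T.dist n m := hp
end

section
/- It is not possible for the tree T_∞ (the set of all finite subsets of ℕ with the shortest path graph metric) to be a Lipschitz quotient of a subset of a Banach space with property (β) of Rolewicz. -/
open scoped Classical

/-- The longest common initial segment (closest common ancestor) of J and K in the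
tree T_∞ of finite subsets of ℕ. -/
noncomputable def treeMeet (J K : Finset ℕ) : Finset ℕ :=
  J.filter (fun a => a ∈ K ∧ ∀ b ≤ a, (b ∈ J ↔ b ∈ K))

/-- The shortest path distance in the tree T_∞ of finite subsets of ℕ. -/
noncomputable def treeDist (J K : Finset ℕ) : ℕ :=
  (J.card - (treeMeet J K).card) + (K.card - (treeMeet J K).card)

/-! If `g` were a Lipschitz quotient with constants `c` and `L`, the point `a` could be moved
to any descendant of `g a` at depth `h` within distance `h / c`. To reach depth `2 ^ (k + 1)`, go
first to a midpoint `m` at depth `2 ^ k`; below `m` there are infinitely many points at depth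
`2 ^ k` on pairwise different branches, hence pairwise `2 ^ (k + 1) / L` apart in `X`.
Property (β), rescaled to the ball around `m` that contains `a` and all of them, brings one of
them within `2 (1 - δ)` times that radius of `a`. By induction depth `2 ^ k` is reached within
distance `(2 (1 - δ)) ^ k / c`, while the Lipschitz bound demands at least `2 ^ k / L`. -/

open Filter Topology

-- `T` lies `h` levels below `S` in `T_∞`, branching off above every element of `F`.
def IsDescendantAbove (S T F : Finset ℕ) (h : ℕ) : Prop :=
  S ⊆ T ∧ T.card = S.card + h ∧ ∀ x ∈ T, x ∉ S → ∀ y ∈ S ∪ F, y < x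

lemma treeMeet_eq {M J K : Finset ℕ} (hMJ : M ⊆ J) (hMK : M ⊆ K)
    (hJK : ∀ x ∈ J, x ∈ K → x ∈ M)
    (hJ : ∀ x ∈ J, x ∉ M → ∀ y ∈ M, y < x) (hK : ∀ x ∈ K, x ∉ M → ∀ y ∈ M, y < x) :
    treeMeet J K = M := by
  ext a
  simp only [treeMeet, Finset.mem_filter]
  refine ⟨fun ⟨haJ, haK, _⟩ => hJK a haJ haK, fun haM => ⟨hMJ haM, hMK haM, fun b hba => ?_⟩⟩
  have hbM_of_J : b ∈ J → b ∈ M := fun hbJ => by_contra fun hbM => (hJ b hbJ hbM a haM).not_ge hba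
  have hbM_of_K : b ∈ K → b ∈ M := fun hbK => by_contra fun hbM => (hK b hbK hbM a haM).not_ge hba
  exact ⟨fun hbJ => hMK (hbM_of_J hbJ), fun hbK => hMJ (hbM_of_K hbK)⟩

namespace IsDescendantAbove

variable {S T M J K F F' Fj Fk : Finset ℕ} {h h' : ℕ}

lemma refl (S F : Finset ℕ) : IsDescendantAbove S S F 0 :=
  ⟨subset_rfl, rfl, fun _ hx hx' => absurd hx hx'⟩

lemma trans (hST : IsDescendantAbove S M F h) (hMT : IsDescendantAbove M T F' h')
    (hFF' : F ⊆ F') : IsDescendantAbove S T F (h + h') := by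
  obtain ⟨hSM, hcardM, hnewM⟩ := hST
  obtain ⟨hMT, hcardT, hnewT⟩ := hMT
  refine ⟨hSM.trans hMT, by omega, fun x hxT hxS y hy => ?_⟩
  by_cases hxM : x ∈ M
  · exact hnewM x hxM hxS y hy
  · exact hnewT x hxT hxM y (Finset.union_subset_union hSM hFF' hy)

lemma treeDist_eq_add (hJ : IsDescendantAbove M J Fj h) (hK : IsDescendantAbove M K Fk h')
    (hJK : ∀ x ∈ J, x ∈ K → x ∈ M) : treeDist J K = h + h' := by
  obtain ⟨hMJ, hcardJ, hnewJ⟩ := hJ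
  obtain ⟨hMK, hcardK, hnewK⟩ := hK
  have hmeet : treeMeet J K = M := treeMeet_eq hMJ hMK hJK
    (fun x hx hx' y hy => hnewJ x hx hx' y (Finset.mem_union_left _ hy))
    (fun x hx hx' y hy => hnewK x hx hx' y (Finset.mem_union_left _ hy))
  simp only [treeDist, hmeet, hcardJ, hcardK]
  omega

lemma treeDist_eq (hST : IsDescendantAbove S T F h) : treeDist S T = h := by
  simpa using (refl S ∅).treeDist_eq_add hST fun x hx _ => hx

end IsDescendantAbove

lemma exists_isDescendantAbove_one (S F : Finset ℕ) : ∃ T, IsDescendantAbove S T F 1 := by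
  set N := (S ∪ F).sup id + 1
  have hN : ∀ y ∈ S ∪ F, y < N := fun y hy => Nat.lt_succ_of_le (Finset.le_sup (f := id) hy)
  have hNS : N ∉ S := fun h => (hN N (Finset.mem_union_left _ h)).false
  refine ⟨insert N S, Finset.subset_insert _ _, Finset.card_insert_of_notMem hNS, ?_⟩
  intro x hx hxS y hy
  rcases Finset.mem_insert.mp hx with rfl | hx
  · exact hN y hy
  · exact absurd hx hxS

/-- Feeding each chosen descendant back into the set to stay above makes any two of them
share no element outside `M`. -/
lemma exists_seq_pairwise_treeDist_eq {M : Finset ℕ} {h : ℕ} (T : Finset ℕ → Finset ℕ)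
    (hT : ∀ F, IsDescendantAbove M (T F) F h) (F : Finset ℕ) :
    ∃ Fs : ℕ → Finset ℕ, (∀ n, F ⊆ Fs n) ∧
      Pairwise fun i j => treeDist (T (Fs i)) (T (Fs j)) = h + h := by
  let Fs : ℕ → Finset ℕ := fun n => Nat.rec F (fun _ Fn => Fn ∪ T Fn) n
  have hmono : Monotone Fs := monotone_nat_of_le_succ fun n => Finset.subset_union_left
  have hTFs : ∀ i j, i < j → T (Fs i) ⊆ Fs j := fun i j hij =>
    Finset.subset_union_right.trans (hmono (Nat.succ_le_of_lt hij))
  have hdisj : ∀ i j, i < j → ∀ x ∈ T (Fs i), x ∈ T (Fs j) → x ∈ M := fun i j hij x hxi hxj =>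
    by_contra fun hxM =>
      ((hT (Fs j)).2.2 x hxj hxM x (Finset.mem_union_right _ (hTFs i j hij hxi))).false
  refine ⟨Fs, fun n => hmono (Nat.zero_le n), fun i j hij => ?_⟩
  rcases hij.lt_or_gt with hij | hij
  · exact (hT _).treeDist_eq_add (hT _) (hdisj i j hij)
  · exact (hT _).treeDist_eq_add (hT _) fun x hxi hxj => hdisj j i hij x hxj hxi

open Filter Topology

def IsLipschitzQuotientOntoTree {α : Type*} [PseudoMetricSpace α] (c L : ℝ)
    (g : α → Finset ℕ) : Prop :=
  ∀ (a : α) (r : ℝ), 0 < r →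
    (∀ J : Finset ℕ, (treeDist (g a) J : ℝ) ≤ c * r → ∃ b, dist a b ≤ r ∧ g b = J) ∧
    (∀ b, dist a b ≤ r → (treeDist (g a) (g b) : ℝ) ≤ L * r)

namespace IsLipschitzQuotientOntoTree

variable {α : Type*} [PseudoMetricSpace α] {c L : ℝ} {g : α → Finset ℕ}

lemma treeDist_le (hg : IsLipschitzQuotientOntoTree c L g) (a b : α) :
    (treeDist (g a) (g b) : ℝ) ≤ L * dist a b := by
  have hlim : Tendsto (fun r => L * r) (𝓝[>] (dist a b)) (𝓝 (L * dist a b)) :=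
    ((continuous_const_mul L).tendsto _).mono_left nhdsWithin_le_nhds
  exact ge_of_tendsto hlim (eventually_nhdsWithin_of_forall fun r hr =>
    (hg a r (dist_nonneg.trans_lt hr)).2 b hr.le)

lemma exists_isDescendantAbove_one (hg : IsLipschitzQuotientOntoTree c L g) (hc : 0 < c)
    (a : α) (F : Finset ℕ) : ∃ b, IsDescendantAbove (g a) (g b) F 1 ∧ dist a b ≤ 1 / c := by
  obtain ⟨T, hT⟩ := _root_.exists_isDescendantAbove_one (g a) F
  obtain ⟨b, hab, rfl⟩ := (hg a (1 / c) (by positivity)).1 T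
    (by rw [hT.treeDist_eq, Nat.cast_one, mul_one_div_cancel hc.ne'])
  exact ⟨b, hT, hab⟩

lemma le [Nonempty α] (hg : IsLipschitzQuotientOntoTree c L g) (hc : 0 < c) : c ≤ L := by
  obtain ⟨b, hb, hab⟩ := hg.exists_isDescendantAbove_one hc (Classical.arbitrary α) ∅
  have h := hg.treeDist_le (Classical.arbitrary α) b
  rw [hb.treeDist_eq, Nat.cast_one] at h
  rw [le_div_iff₀ hc] at hab
  have hL : 0 ≤ L := by
    by_contra! hL
    nlinarith [dist_nonneg (x := Classical.arbitrary α) (y := b)]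
  nlinarith

end IsLipschitzQuotientOntoTree

def IsBetaModulus (X : Type*) [NormedAddCommGroup X] (t δ : ℝ) : Prop :=
  ∀ (x : X) (xs : ℕ → X), ‖x‖ ≤ 1 → (∀ n, ‖xs n‖ ≤ 1) →
    (∀ n m, n ≠ m → t ≤ ‖xs n - xs m‖) → ∃ n, ‖x - xs n‖ / 2 ≤ 1 - δ

namespace IsBetaModulus

variable {X : Type*} [NormedAddCommGroup X] {t δ : ℝ}

lemma mono {δ' : ℝ} (h : IsBetaModulus X t δ) (hδ' : δ' ≤ δ) :
    IsBetaModulus X t δ' := fun x xs hx hxs hsep =>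
  (h x xs hx hxs hsep).imp fun _ hn => hn.trans (by linarith)

lemma exists_norm_sub_le [NormedSpace ℝ X] (h : IsBetaModulus X t δ) {s : ℝ}
    (hs : 0 < s) {m x : X} {y : ℕ → X} (hx : ‖x - m‖ ≤ s) (hy : ∀ n, ‖y n - m‖ ≤ s)
    (hsep : ∀ i j, i ≠ j → t * s ≤ ‖y i - y j‖) : ∃ n, ‖x - y n‖ ≤ 2 * (1 - δ) * s := by
  have hnorm : ∀ u : X, ‖s⁻¹ • (u - m)‖ = ‖u - m‖ / s := fun u => by
    rw [norm_smul_of_nonneg (inv_nonneg.2 hs.le), inv_mul_eq_div]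
  have hdist : ∀ u w : X, ‖s⁻¹ • (u - m) - s⁻¹ • (w - m)‖ = ‖u - w‖ / s := fun u w => by
    rw [← smul_sub, sub_sub_sub_cancel_right, norm_smul_of_nonneg (inv_nonneg.2 hs.le),
      inv_mul_eq_div]
  obtain ⟨n, hn⟩ := h (s⁻¹ • (x - m)) (fun n => s⁻¹ • (y n - m))
    (by rw [hnorm, div_le_one hs]; exact hx) (fun n => by rw [hnorm, div_le_one hs]; exact hy n)
    (fun i j hij => by rw [hdist, le_div_iff₀ hs]; exact hsep i j hij)
  refine ⟨n, ?_⟩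
  rw [hdist, div_div, div_le_iff₀ (by positivity)] at hn
  linarith

end IsBetaModulus

namespace IsLipschitzQuotientOntoTree

variable {X : Type*} [NormedAddCommGroup X] [NormedSpace ℝ X] {A : Set X} {g : A → Finset ℕ}
  {c L δ : ℝ}

lemma exists_isDescendantAbove_two_pow_succ (hg : IsLipschitzQuotientOntoTree c L g)
    (hc : 0 < c) (hL : 0 < L) (hδ : IsBetaModulus X (2 * c / L) δ) (hδ₀ : 0 ≤ δ)
    (hδ₁ : δ < 1) {k : ℕ}
    (ih : ∀ (a : A) (F : Finset ℕ),
      ∃ b, IsDescendantAbove (g a) (g b) F (2 ^ k) ∧ dist a b ≤ (2 * (1 - δ)) ^ k / c)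
    (a : A) (F : Finset ℕ) :
    ∃ b, IsDescendantAbove (g a) (g b) F (2 ^ (k + 1)) ∧
      dist a b ≤ (2 * (1 - δ)) ^ (k + 1) / c := by
  set s := (2 * (1 - δ)) ^ k / c with hs_def
  have hs : 0 < s := by
    have : 0 < 1 - δ := by linarith
    positivity
  have hcs : c * s ≤ 2 ^ k := by
    rw [hs_def, mul_div_cancel₀ _ hc.ne']
    exact pow_le_pow_left₀ (by positivity) (by linarith) k
  obtain ⟨m, hm, ham⟩ := ih a F
  choose W hW hmW using ih m
  obtain ⟨Fs, hFFs, hsep⟩ := exists_seq_pairwise_treeDist_eq (fun F => g (W F)) hW F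
  have hsepX : ∀ i j, i ≠ j → 2 * c / L * s ≤ ‖(W (Fs i) : X) - W (Fs j)‖ := by
    intro i j hij
    have h := hg.treeDist_le (W (Fs i)) (W (Fs j))
    rw [hsep hij] at h
    push_cast at h
    rw [div_mul_eq_mul_div, div_le_iff₀ hL, ← dist_eq_norm]
    change _ ≤ dist (W (Fs i)) (W (Fs j)) * L
    linarith
  obtain ⟨n, hn⟩ := hδ.exists_norm_sub_le hs (x := (a : X)) (y := fun n => (W (Fs n) : X))
    (by rw [← dist_eq_norm]; exact ham) (fun n => by rw [← dist_eq_norm, dist_comm]; exact hmW _)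
    hsepX
  refine ⟨W (Fs n), by simpa [pow_succ, mul_two] using hm.trans (hW (Fs n)) (hFFs n), ?_⟩
  calc dist a (W (Fs n)) = ‖(a : X) - W (Fs n)‖ := dist_eq_norm (a : X) _
    _ ≤ 2 * (1 - δ) * s := hn
    _ = (2 * (1 - δ)) ^ (k + 1) / c := by rw [hs_def, pow_succ]; ring

lemma exists_isDescendantAbove_two_pow (hg : IsLipschitzQuotientOntoTree c L g) (hc : 0 < c)
    (hL : 0 < L) (hδ : IsBetaModulus X (2 * c / L) δ) (hδ₀ : 0 ≤ δ) (hδ₁ : δ < 1) (k : ℕ) (a : A)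
    (F : Finset ℕ) :
    ∃ b, IsDescendantAbove (g a) (g b) F (2 ^ k) ∧ dist a b ≤ (2 * (1 - δ)) ^ k / c := by
  induction k generalizing a F with
  | zero => simpa using hg.exists_isDescendantAbove_one hc a F
  | succ k ih => exact hg.exists_isDescendantAbove_two_pow_succ hc hL hδ hδ₀ hδ₁ ih a F

lemma le_mul_pow [Nonempty A] (hg : IsLipschitzQuotientOntoTree c L g) (hc : 0 < c)
    (hL : 0 < L) (hδ : IsBetaModulus X (2 * c / L) δ) (hδ₀ : 0 ≤ δ) (hδ₁ : δ < 1) (k : ℕ) :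
    c ≤ L * (1 - δ) ^ k := by
  obtain ⟨b, hb, hab⟩ :=
    hg.exists_isDescendantAbove_two_pow hc hL hδ hδ₀ hδ₁ k (Classical.arbitrary A) ∅
  have h := hg.treeDist_le (Classical.arbitrary A) b
  rw [hb.treeDist_eq, Nat.cast_pow, Nat.cast_ofNat] at h
  have h2k : (0 : ℝ) < 2 ^ k := by positivity
  have : 2 ^ k * c ≤ 2 ^ k * (L * (1 - δ) ^ k) := by
    calc 2 ^ k * c ≤ L * dist (Classical.arbitrary A) b * c := by gcongr
      _ ≤ L * ((2 * (1 - δ)) ^ k / c) * c := by gcongr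
      _ = 2 ^ k * (L * (1 - δ) ^ k) := by rw [mul_pow]; field_simp
  exact le_of_mul_le_mul_left this h2k

end IsLipschitzQuotientOntoTree

theorem no_lipschitz_quotient_onto_tree_general
    (X : Type*) [NormedAddCommGroup X] [NormedSpace ℝ X]
    (hβ : ∀ t : ℝ, 0 < t → t ≤ 2 → ∃ δ : ℝ, 0 < δ ∧
      ∀ (x : X) (xs : ℕ → X), ‖x‖ ≤ 1 → (∀ n, ‖xs n‖ ≤ 1) →
        (∀ n m, n ≠ m → t ≤ ‖xs n - xs m‖) →
        ∃ n, ‖x - xs n‖ / 2 ≤ 1 - δ)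
    (A : Set X) (g : A → Finset ℕ) (hsurj : Function.Surjective g) :
    ¬ ∃ c L : ℝ, 0 < c ∧ 0 < L ∧ ∀ (a : A) (r : ℝ), 0 < r →
      (∀ J : Finset ℕ, (treeDist (g a) J : ℝ) ≤ c * r →
        ∃ b : A, dist (a : X) (b : X) ≤ r ∧ g b = J) ∧
      (∀ b : A, dist (a : X) (b : X) ≤ r → (treeDist (g a) (g b) : ℝ) ≤ L * r) := by
  rintro ⟨c, L, hc, hL, hg⟩
  replace hg : IsLipschitzQuotientOntoTree c L g := hg
  have : Nonempty A := hsurj.nonempty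
  obtain ⟨δ, hδ, hβδ⟩ := hβ (2 * c / L) (by positivity)
    (by rw [div_le_iff₀ hL]; linarith [hg.le hc])
  -- a smaller `δ` is still a modulus, and keeps `1 - δ` positive
  have hδ' : 0 < min δ (1 / 2) := lt_min hδ one_half_pos
  obtain ⟨k, hk⟩ := exists_pow_lt_of_lt_one (div_pos hc hL) (sub_lt_self 1 hδ')
  have := hg.le_mul_pow hc hL (IsBetaModulus.mono hβδ (min_le_left _ _)) hδ'.le
    ((min_le_right _ _).trans_lt one_half_lt_one) k
  rw [lt_div_iff₀ hL] at hk
  linarith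

/-- T_∞ is not a Lipschitz quotient of a subset of a Banach space with property (β). -/
theorem no_lipschitz_quotient_onto_tree
    (X : Type*) [NormedAddCommGroup X] [NormedSpace ℝ X] [CompleteSpace X]
    (hβ : ∀ t : ℝ, 0 < t → t ≤ 2 → ∃ δ : ℝ, 0 < δ ∧
      ∀ (x : X) (xs : ℕ → X), ‖x‖ ≤ 1 → (∀ n, ‖xs n‖ ≤ 1) →
        (∀ n m, n ≠ m → t ≤ ‖xs n - xs m‖) →
        ∃ n, ‖x - xs n‖ / 2 ≤ 1 - δ)
    (A : Set X) (g : A → Finset ℕ) (hsurj : Function.Surjective g) :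
    ¬ ∃ c L : ℝ, 0 < c ∧ 0 < L ∧ ∀ (a : A) (r : ℝ), 0 < r →
      (∀ J : Finset ℕ, (treeDist (g a) J : ℝ) ≤ c * r →
        ∃ b : A, dist (a : X) (b : X) ≤ r ∧ g b = J) ∧
      (∀ b : A, dist (a : X) (b : X) ≤ r → (treeDist (g a) (g b) : ℝ) ≤ L * r) :=
  no_lipschitz_quotient_onto_tree_general X hβ A g hsurj
end
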